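/- arXiv:math/0110224 — 3 statements merged into one kernel-verified Lean document; each statement's English description precedes it below -/
import Mathlib

section
/- Let F ∈ ℂ[x,y] be a binary quartic (homogeneous of degree 4) over ℂ, and set H = (F,F)^2. Then F factors as L^2·M^2 for some linear forms L, M (homogeneous of degree 1) if and only if the transvectant (F,H)^1 is the zero polynomial. -/
open MvPolynomial

/-- Partial derivative with respect to `x` (the variable `0`). -/
noncomputable def pdx : MvPolynomial (Fin 2) ℂ → MvPolynomial (Fin 2) ℂ :=
  fun p => MvPolynomial.pderiv (0 : Fin 2) p

/-- Partial derivative with respect to `y` (the variable `1`). -/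
noncomputable def pdy : MvPolynomial (Fin 2) ℂ → MvPolynomial (Fin 2) ℂ :=
  fun p => MvPolynomial.pderiv (1 : Fin 2) p

/-- The `r`-th transvectant of binary forms `Φ₁`, `Φ₂` of degrees `q₁`, `q₂`, with the
classical symbolic-method normalization
`((q₁−r)!·(q₂−r)!)/(q₁!·q₂!) · Σ_{k=0}^{r} (−1)^k·binom(r,k)·
  (∂^rΦ₁/∂x^{r−k}∂y^k)·(∂^rΦ₂/∂x^k∂y^{r−k})`. -/
noncomputable def transvectant (q₁ q₂ r : ℕ) (Φ₁ Φ₂ : MvPolynomial (Fin 2) ℂ) :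
    MvPolynomial (Fin 2) ℂ :=
  MvPolynomial.C ((((q₁ - r).factorial : ℂ) * ((q₂ - r).factorial : ℂ)) /
      ((q₁.factorial : ℂ) * (q₂.factorial : ℂ))) *
    ∑ k ∈ Finset.range (r + 1),
      MvPolynomial.C ((-1 : ℂ) ^ k * (r.choose k : ℂ)) *
        (pdx^[r - k] (pdy^[k] Φ₁)) * (pdx^[k] (pdy^[r - k] Φ₂))


/-!
Write `F = ∑ cᵢ x⁴⁻ⁱ yⁱ`. Then `H` is the quartic with coefficients quadratic in the `cᵢ`, and
`(F, H)¹` is a sextic with coefficients cubic in the `cᵢ`. If `F = Q²` with `Q` quadratic these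
coefficients vanish identically. Conversely, already the vanishing of the coefficients of `x⁶`,
`x⁵y`, `xy⁵`, `y⁶` makes `F` the square of a quadratic form, obtained by completing the square;
over `ℂ` that quadratic form splits into two linear forms.
-/

section BinaryForm

variable {R : Type*} [CommSemiring R]

noncomputable def binaryForm (n : ℕ) (c : Fin (n + 1) → R) : MvPolynomial (Fin 2) R :=
  ∑ i, C (c i) * X 0 ^ (n - i) * X 1 ^ (i : ℕ)

noncomputable def binaryExponent (n i : ℕ) : Fin 2 →₀ ℕ :=
  Finsupp.single 0 (n - i) + Finsupp.single 1 i

lemma binaryExponent_injective (n : ℕ) : Function.Injective (binaryExponent n) :=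
  fun i j h => by simpa [binaryExponent] using DFunLike.congr_fun h 1

lemma C_mul_X_pow_mul_X_pow (a : R) (n i : ℕ) :
    C a * X 0 ^ (n - i) * X 1 ^ i = monomial (binaryExponent n i) a := by
  rw [C_mul_X_pow_eq_monomial, X_pow_eq_monomial, monomial_mul, mul_one, binaryExponent]

lemma binaryForm_eq_sum_monomial (n : ℕ) (c : Fin (n + 1) → R) :
    binaryForm n c = ∑ i : Fin (n + 1), monomial (binaryExponent n i) (c i) := by
  simp only [binaryForm, C_mul_X_pow_mul_X_pow]

lemma coeff_binaryForm (n : ℕ) (c : Fin (n + 1) → R) (j : Fin (n + 1)) :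
    coeff (binaryExponent n j) (binaryForm n c) = c j := by
  rw [binaryForm_eq_sum_monomial, coeff_sum, Finset.sum_eq_single j]
  · simp
  · intro i _ hij
    rw [coeff_monomial, if_neg]
    exact fun h => hij (Fin.ext (binaryExponent_injective n h))
  · simp

lemma binaryForm_injective (n : ℕ) : Function.Injective (binaryForm (R := R) n) :=
  fun c c' h => funext fun j => by
    simpa only [coeff_binaryForm] using congrArg (coeff (binaryExponent n j)) h

lemma binaryForm_eq_zero_iff {n : ℕ} {c : Fin (n + 1) → R} : binaryForm n c = 0 ↔ c = 0 := by
  rw [← (binaryForm_injective n).eq_iff]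
  simp [binaryForm]

lemma isHomogeneous_binaryForm (n : ℕ) (c : Fin (n + 1) → R) :
    (binaryForm n c).IsHomogeneous n :=
  IsHomogeneous.sum _ _ _ fun i _ => by
    simpa [Nat.sub_add_cancel i.is_le] using
      (isHomogeneous_C_mul_X_pow (c i) 0 (n - i)).mul (isHomogeneous_X_pow 1 (i : ℕ))

lemma MvPolynomial.IsHomogeneous.exists_eq_binaryForm {F : MvPolynomial (Fin 2) R} {n : ℕ}
    (hF : F.IsHomogeneous n) : ∃ c, F = binaryForm n c := by
  refine ⟨fun i => coeff (binaryExponent n i) F, ?_⟩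
  have hsupp : F.support ⊆ Finset.univ.image fun i : Fin (n + 1) => binaryExponent n i := by
    intro d hd
    have hdeg : d 0 + d 1 = n := by
      by_contra hne
      refine MvPolynomial.mem_support_iff.mp hd (hF.coeff_eq_zero ?_)
      rwa [Finsupp.degree_eq_sum, Fin.sum_univ_two]
    refine Finset.mem_image.mpr ⟨⟨d 1, by omega⟩, Finset.mem_univ _, ?_⟩
    ext k
    fin_cases k <;> simp [binaryExponent]
    omega
  calc F = ∑ d ∈ F.support, monomial d (coeff d F) := F.as_sum
    _ = ∑ d ∈ Finset.univ.image fun i : Fin (n + 1) => binaryExponent n i,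
          monomial d (coeff d F) :=
        Finset.sum_subset hsupp fun d _ hd => by
          rw [MvPolynomial.notMem_support_iff.mp hd, monomial_zero]
    _ = binaryForm n _ := by
        rw [Finset.sum_image fun i _ j _ h => Fin.ext (binaryExponent_injective n h),
          binaryForm_eq_sum_monomial]

def sqCoeffs (q : Fin 3 → R) : Fin 5 → R :=
  ![q 0 ^ 2, 2 * q 0 * q 1, q 1 ^ 2 + 2 * q 0 * q 2, 2 * q 1 * q 2, q 2 ^ 2]

lemma eq_sqCoeffs_iff {c : Fin 5 → R} {q₀ q₁ q₂ : R} :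
    c = sqCoeffs ![q₀, q₁, q₂] ↔ c 0 = q₀ ^ 2 ∧ c 1 = 2 * q₀ * q₁ ∧ c 2 = q₁ ^ 2 + 2 * q₀ * q₂ ∧
      c 3 = 2 * q₁ * q₂ ∧ c 4 = q₂ ^ 2 := by
  simp [funext_iff, Fin.forall_fin_succ, sqCoeffs]

lemma binaryForm_two_sq (q : Fin 3 → R) : binaryForm 2 q ^ 2 = binaryForm 4 (sqCoeffs q) := by
  simp [binaryForm, Fin.sum_univ_succ, sqCoeffs, map_ofNat C]
  ring

lemma binaryForm_one_mul (l m : Fin 2 → R) :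
    binaryForm 1 l * binaryForm 1 m =
      binaryForm 2 ![l 0 * m 0, l 0 * m 1 + l 1 * m 0, l 1 * m 1] := by
  simp [binaryForm, Fin.sum_univ_succ]
  ring

end BinaryForm

lemma exists_binaryForm_two_eq_mul {K : Type*} [Field K] [IsAlgClosed K] [NeZero (2 : K)]
    (q : Fin 3 → K) : ∃ l m : Fin 2 → K, binaryForm 2 q = binaryForm 1 l * binaryForm 1 m := by
  by_cases hq : q 0 = 0
  · refine ⟨![0, 1], ![q 1, q 2], ?_⟩
    rw [binaryForm_one_mul]
    congr 1
    funext i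
    fin_cases i <;> simp [hq]
  · obtain ⟨w, hw⟩ := IsAlgClosed.exists_pow_nat_eq (q 1 ^ 2 - 4 * q 0 * q 2) two_pos
    refine ⟨![q 0, (q 1 + w) / 2], ![1, (q 1 - w) / (2 * q 0)], ?_⟩
    rw [binaryForm_one_mul]
    congr 1
    funext i
    fin_cases i <;> simp
    · field_simp; ring
    · field_simp; linear_combination hw

lemma pdx_binaryForm (n : ℕ) (c : Fin (n + 2) → ℂ) :
    pdx (binaryForm (n + 1) c) =
      binaryForm n fun i => ((n + 1 - i : ℕ) : ℂ) * c i.castSucc := by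
  rw [binaryForm, Fin.sum_univ_castSucc]
  simp [pdx, binaryForm, Derivation.leibniz_pow, pderiv_X, Nat.sub_sub, mul_comm, mul_left_comm,
    mul_assoc]

lemma pdy_binaryForm (n : ℕ) (c : Fin (n + 2) → ℂ) :
    pdy (binaryForm (n + 1) c) = binaryForm n fun i => ((i + 1 : ℕ) : ℂ) * c i.succ := by
  rw [binaryForm, Fin.sum_univ_succ]
  simp [pdy, binaryForm, Derivation.leibniz_pow, pderiv_X, mul_comm, mul_left_comm, mul_assoc]

noncomputable def hessianCoeffs (c : Fin 5 → ℂ) : Fin 5 → ℂ :=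
  ![c 0 * c 2 / 3 - c 1 ^ 2 / 8, c 0 * c 3 - c 1 * c 2 / 6,
    2 * c 0 * c 4 + c 1 * c 3 / 4 - c 2 ^ 2 / 6, c 1 * c 4 - c 2 * c 3 / 6,
    c 2 * c 4 / 3 - c 3 ^ 2 / 8]

noncomputable def transvectantOneCoeffs (a b : Fin 5 → ℂ) : Fin 7 → ℂ :=
  ![(a 0 * b 1 - a 1 * b 0) / 4, (a 0 * b 2 - a 2 * b 0) / 2,
    (3 * a 0 * b 3 + a 1 * b 2 - a 2 * b 1 - 3 * a 3 * b 0) / 4,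
    a 0 * b 4 + (a 1 * b 3 - a 3 * b 1) / 2 - a 4 * b 0,
    (3 * a 1 * b 4 + a 2 * b 3 - a 3 * b 2 - 3 * a 4 * b 1) / 4, (a 2 * b 4 - a 4 * b 2) / 2,
    (a 3 * b 4 - a 4 * b 3) / 4]

lemma transvectant_two_binaryForm_four_self (c : Fin 5 → ℂ) :
    transvectant 4 4 2 (binaryForm 4 c) (binaryForm 4 c) = binaryForm 4 (hessianCoeffs c) := by
  refine MvPolynomial.funext fun x => ?_
  simp [transvectant, Finset.sum_range_succ, Nat.factorial, pdx_binaryForm, pdy_binaryForm]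
  simp [hessianCoeffs, binaryForm, Fin.sum_univ_succ]
  ring

lemma transvectant_one_binaryForm_four (a b : Fin 5 → ℂ) :
    transvectant 4 4 1 (binaryForm 4 a) (binaryForm 4 b) =
      binaryForm 6 (transvectantOneCoeffs a b) := by
  refine MvPolynomial.funext fun x => ?_
  simp [transvectant, Finset.sum_range_succ, Nat.factorial, pdx_binaryForm, pdy_binaryForm]
  simp [transvectantOneCoeffs, binaryForm, Fin.sum_univ_succ]
  ring

lemma transvectantOneCoeffs_sqCoeffs_hessianCoeffs (q : Fin 3 → ℂ) :
    transvectantOneCoeffs (sqCoeffs q) (hessianCoeffs (sqCoeffs q)) = 0 := by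
  funext i
  fin_cases i <;> simp [transvectantOneCoeffs, hessianCoeffs, sqCoeffs] <;> ring

lemma exists_eq_sqCoeffs_of_leading_ne_zero (c : Fin 5 → ℂ) (hc0 : c 0 ≠ 0)
    (h3 : c 1 ^ 3 - 4 * c 0 * c 1 * c 2 + 8 * c 0 ^ 2 * c 3 = 0)
    (h4 : 64 * c 0 ^ 3 * c 4 - 16 * c 0 ^ 2 * c 2 ^ 2 + 8 * c 0 * c 1 ^ 2 * c 2 - c 1 ^ 4 = 0) :
    ∃ q, c = sqCoeffs q := by
  obtain ⟨s, hs⟩ := IsAlgClosed.exists_pow_nat_eq (c 0) two_pos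
  have hs0 : s ≠ 0 := by rintro rfl; simp_all
  rw [← hs] at h3 h4
  refine ⟨![s, c 1 / (2 * s), (4 * s ^ 2 * c 2 - c 1 ^ 2) / (8 * s ^ 3)],
    eq_sqCoeffs_iff.mpr ⟨hs.symm, ?_, ?_, ?_, ?_⟩⟩
  · field_simp
  · field_simp; ring
  · field_simp; linear_combination h3
  · field_simp; linear_combination h4

lemma exists_eq_sqCoeffs_of_leading_eq_zero (c : Fin 5 → ℂ) (hc0 : c 0 = 0) (hc1 : c 1 = 0)
    (h3 : c 3 ^ 3 = 4 * c 2 * c 3 * c 4) (h4 : c 2 * (c 3 ^ 2 - 4 * c 2 * c 4) = 0) :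
    ∃ q, c = sqCoeffs q := by
  by_cases hc2 : c 2 = 0
  · have hc3 : c 3 = 0 := pow_eq_zero_iff three_ne_zero |>.mp (by rw [h3, hc2]; ring)
    obtain ⟨r, hr⟩ := IsAlgClosed.exists_pow_nat_eq (c 4) two_pos
    exact ⟨![0, 0, r], eq_sqCoeffs_iff.mpr (by simp [hc0, hc1, hc2, hc3, hr])⟩
  · have hD : c 3 ^ 2 = 4 * c 2 * c 4 := sub_eq_zero.mp ((mul_eq_zero.mp h4).resolve_left hc2)
    obtain ⟨r, hr⟩ := IsAlgClosed.exists_pow_nat_eq (c 2) two_pos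
    have hr0 : r ≠ 0 := by rintro rfl; simp_all
    refine ⟨![0, r, c 3 / (2 * r)], eq_sqCoeffs_iff.mpr ⟨by simp [hc0], by simp [hc1], by simp [hr],
      by field_simp, by field_simp; linear_combination 4 * c 4 * hr - hD⟩⟩

lemma exists_eq_sqCoeffs_of_transvectantOneCoeffs_hessianCoeffs_eq_zero (c : Fin 5 → ℂ)
    (h : transvectantOneCoeffs c (hessianCoeffs c) = 0) : ∃ q, c = sqCoeffs q := by
  have h0 := congrFun h 0
  have h1 := congrFun h 1
  have h5 := congrFun h 5
  have h6 := congrFun h 6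
  simp [transvectantOneCoeffs, hessianCoeffs] at h0 h1 h5 h6
  have h3 : c 1 ^ 3 - 4 * c 0 * c 1 * c 2 + 8 * c 0 ^ 2 * c 3 = 0 := by linear_combination 8 * h0
  by_cases hc0 : c 0 = 0
  · have hc1 : c 1 = 0 := pow_eq_zero_iff three_ne_zero |>.mp <| by
      linear_combination h3 + (4 * c 1 * c 2 - 8 * c 0 * c 3) * hc0
    refine exists_eq_sqCoeffs_of_leading_eq_zero c hc0 hc1 ?_ ?_
    · linear_combination -8 * h6 - 8 * c 4 ^ 2 * hc1
    · linear_combination -8 * h5 - 16 * c 4 ^ 2 * hc0 - 2 * c 3 * c 4 * hc1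
  · exact exists_eq_sqCoeffs_of_leading_ne_zero c hc0 h3
      (by linear_combination 32 * c 0 * h1 - c 1 * h3)

/-- A binary quartic `F` is of the form `L²M²` iff the covariant `(F,H)` vanishes,
where `H = (F,F)²` is the Hessian. -/
theorem quartic_twoDoubleRoots_iff (F : MvPolynomial (Fin 2) ℂ)
    (hF : F.IsHomogeneous 4) (H : MvPolynomial (Fin 2) ℂ)
    (hH : H = transvectant 4 4 2 F F) :
    (∃ L M : MvPolynomial (Fin 2) ℂ, L.IsHomogeneous 1 ∧ M.IsHomogeneous 1 ∧
        F = L ^ 2 * M ^ 2) ↔ transvectant 4 4 1 F H = 0 := by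
  obtain ⟨c, rfl⟩ := hF.exists_eq_binaryForm
  rw [hH, transvectant_two_binaryForm_four_self, transvectant_one_binaryForm_four,
    binaryForm_eq_zero_iff]
  constructor
  · rintro ⟨L, M, hL, hM, hLM⟩
    obtain ⟨q, hq⟩ := (hL.mul hM).exists_eq_binaryForm
    rw [← mul_pow, hq, binaryForm_two_sq] at hLM
    rw [binaryForm_injective 4 hLM]
    exact transvectantOneCoeffs_sqCoeffs_hessianCoeffs q
  · intro h
    obtain ⟨q, rfl⟩ := exists_eq_sqCoeffs_of_transvectantOneCoeffs_hessianCoeffs_eq_zero c h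
    obtain ⟨l, m, hlm⟩ := exists_binaryForm_two_eq_mul q
    exact ⟨_, _, isHomogeneous_binaryForm 1 l, isHomogeneous_binaryForm 1 m, by
      rw [← binaryForm_two_sq, hlm, mul_pow]⟩
end

section
/- Let λ = (1^{e₁} 2^{e₂} ⋯ d^{e_d}) be a partition of d. Let F ∈ ℂ[x,y] be a nonzero binary form of degree d admitting two inequivalent factorizations (G_r) and (H_r) of type λ, such that in each factorization any two components of distinct indices are coprime (for r ≠ r', G_r and G_{r'} have no common linear factor, and likewise H_r and H_{r'}). Then there exists a partition μ ∈ S_λ^{(b)} ∪ S_λ^{(c)} such that F admits a factorization of type μ. -/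
/-!
Every linear form `L` dividing `F` is prime, and by coprimality it lies in exactly one component
of each factorization, say `G r₁` and `H r₂`, with
`r₁ · mult_L (G r₁) = mult_L F = r₂ · mult_L (H r₂)`. Since binary forms over `ℂ` split into
linear forms, `r₁ = r₂` for every `L` would make the two factorizations equivalent. So some `L`
is a mismatch `r₁ ≠ r₂`; take one with `ℓ = lcm r₁ r₂` minimal. As `ℓ` divides `mult_L F`,
`L ^ (ℓ / r₁) ∣ G r₁` and `L ^ (ℓ / r₂) ∣ H r₂`. If `ℓ = r₁` (or `ℓ = r₂`), moving
`L ^ (ℓ / r₂)` from `H r₂` into `H r₁` (or symmetrically in `G`) gives a factorization of a type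
in `S_λ^(b)`. Otherwise `H r₂` is not a multiple of `G r₂`, so some linear `M ∣ G r₂` lies in a
component `H r'` with `r' ≠ r₂`; minimality gives `ℓ ≤ lcm r₂ r'`, hence `M ^ (ℓ / r₂) ∣ G r₂`,
and moving both `L ^ (ℓ / r₁)` and `M ^ (ℓ / r₂)` into `G ℓ` gives a factorization of a type in
`S_λ^(c)`.
-/

open MvPolynomial

/-- A factorization of type `λ = (1^{e₁} 2^{e₂} ⋯ d^{e_d})` of a binary form `F` of
degree `d`: a tuple `(G₁,…,G_d)` with `G_r` homogeneous of degree `e_r` and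
`F = c·∏_{r=1}^d G_r^r` for some nonzero scalar `c`. -/
def IsFactorizationOfType (d : ℕ) (e : ℕ → ℕ) (F : MvPolynomial (Fin 2) ℂ)
    (G : ℕ → MvPolynomial (Fin 2) ℂ) : Prop :=
  (∀ r ∈ Finset.Icc 1 d, (G r).IsHomogeneous (e r)) ∧
    ∃ c : ℂ, c ≠ 0 ∧ F = c • ∏ r ∈ Finset.Icc 1 d, G r ^ r

/-- Two factorizations `(G_r)`, `(H_r)` are equivalent if each `H_r` is a nonzero scalar
multiple of `G_r`. -/
def EquivFactorizations (d : ℕ) (G H : ℕ → MvPolynomial (Fin 2) ℂ) : Prop :=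
  ∀ r ∈ Finset.Icc 1 d, ∃ c : ℂ, c ≠ 0 ∧ H r = c • G r

/-- The components of distinct indices of `(G_r)` have no common linear factor. -/
def PairwiseCoprimeComponents (d : ℕ) (G : ℕ → MvPolynomial (Fin 2) ℂ) : Prop :=
  ∀ r ∈ Finset.Icc 1 d, ∀ r' ∈ Finset.Icc 1 d, r ≠ r' →
    ¬ ∃ L : MvPolynomial (Fin 2) ℂ, L ≠ 0 ∧ L.IsHomogeneous 1 ∧ L ∣ G r ∧ L ∣ G r'

/-- `μ = (1^{f₁}⋯d^{f_d}) ∈ S_λ^{(a)}`, where `λ = (1^{e₁}⋯d^{e_d})`. -/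
def SlamA (e f : ℕ → ℕ) : Prop :=
  ∃ r₁ r₂ : ℕ, r₁ ≠ r₂ ∧ 1 ≤ e r₁ ∧ 1 ≤ e r₂ ∧
    f r₁ = e r₁ - 1 ∧ f r₂ = e r₂ - 1 ∧ f (r₁ + r₂) = e (r₁ + r₂) + 1 ∧
    ∀ r : ℕ, r ≠ r₁ → r ≠ r₂ → r ≠ r₁ + r₂ → f r = e r

/-- `μ = (1^{f₁}⋯d^{f_d}) ∈ S_λ^{(b)}`, where `λ = (1^{e₁}⋯d^{e_d})`. -/
def SlamB (e f : ℕ → ℕ) : Prop :=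
  ∃ r₁ r₂ t : ℕ, r₁ ≠ r₂ ∧ 1 ≤ t ∧ r₁ = t * r₂ ∧ 1 ≤ e r₁ ∧ t ≤ e r₂ ∧
    f r₁ = e r₁ + 1 ∧ f r₂ = e r₂ - t ∧
    ∀ r : ℕ, r ≠ r₁ → r ≠ r₂ → f r = e r

/-- `μ = (1^{f₁}⋯d^{f_d}) ∈ S_λ^{(c)}`, where `λ = (1^{e₁}⋯d^{e_d})`. -/
def SlamC (e f : ℕ → ℕ) : Prop :=
  ∃ r₁ r₂ r₃ t₁ t₂ : ℕ, r₁ ≠ r₂ ∧ r₁ ≠ r₃ ∧ r₂ ≠ r₃ ∧ 1 ≤ t₁ ∧ 1 ≤ t₂ ∧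
    r₃ = t₁ * r₁ ∧ r₃ = t₂ * r₂ ∧ t₁ ≤ e r₁ ∧ t₂ ≤ e r₂ ∧
    f r₁ = e r₁ - t₁ ∧ f r₂ = e r₂ - t₂ ∧ f r₃ = e r₃ + 2 ∧
    ∀ r : ℕ, r ≠ r₁ → r ≠ r₂ → r ≠ r₃ → f r = e r

namespace MvPolynomial
variable {σ R K : Type*} [CommRing R] [Field K]

attribute [local instance] gradedAlgebra in
theorem homogeneousComponent_mul_of_isHomogeneous_left {B : MvPolynomial σ R} {k : ℕ}
    (hB : B.IsHomogeneous k) (C : MvPolynomial σ R) (j : ℕ) :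
    homogeneousComponent (k + j) (B * C) = B * homogeneousComponent j C := by
  rw [← decomposition.decompose'_apply, ← decomposition.decompose'_apply]
  exact DirectSum.coe_decompose_mul_add_of_left_mem _ ((mem_homogeneousSubmodule _ _).mpr hB)

theorem IsHomogeneous.of_mul_left [IsDomain R] {B C : MvPolynomial σ R} {k m : ℕ}
    (hBC : (B * C).IsHomogeneous m) (hB : B.IsHomogeneous k) (h0 : B * C ≠ 0) :
    k ≤ m ∧ C.IsHomogeneous (m - k) := by
  have hB0 : B ≠ 0 := left_ne_zero_of_mul h0
  have hdeg : ∀ v, coeff v C ≠ 0 → k + v.degree = m := by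
    intro v hv
    have hcomp : homogeneousComponent v.degree C ≠ 0 := fun h =>
      hv (by simpa [coeff_homogeneousComponent] using congrArg (coeff v) h)
    by_contra hne
    apply mul_ne_zero hB0 hcomp
    rw [← homogeneousComponent_mul_of_isHomogeneous_left hB, homogeneousComponent_of_mem hBC,
      if_neg hne]
  obtain ⟨v, hv⟩ := ne_zero_iff.mp (right_ne_zero_of_mul h0)
  refine ⟨(hdeg v hv).le.trans' (Nat.le_add_right k _), fun w hw => ?_⟩
  have := hdeg w hw
  rw [Finsupp.degree_eq_weight_one, ← Pi.one_def] at this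
  omega

theorem IsHomogeneous.le_of_pow_dvd [IsDomain R] {P L : MvPolynomial σ R} {n t : ℕ}
    (hP : P.IsHomogeneous n) (hP0 : P ≠ 0) (hL : L.IsHomogeneous 1) (h : L ^ t ∣ P) : t ≤ n := by
  obtain ⟨W, rfl⟩ := h
  simpa using (hP.of_mul_left (hL.pow t) hP0).1

theorem IsHomogeneous.prime_of_degree_one {L : MvPolynomial σ K} (hL : L.IsHomogeneous 1)
    (hL0 : L ≠ 0) : Prime L := by
  refine (irreducible_of_totalDegree_eq_one (hL.totalDegree hL0) fun x hx => ?_).prime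
  obtain ⟨v, hv⟩ := ne_zero_iff.mp hL0
  exact isUnit_iff_ne_zero.mpr (ne_zero_of_dvd_ne_zero hv (hx v))

theorem IsHomogeneous.exists_eq_C {P : MvPolynomial σ R} (hP : P.IsHomogeneous 0) :
    ∃ c, P = C c :=
  ⟨_, totalDegree_eq_zero_iff_eq_C.mp (Nat.le_zero.mp hP.totalDegree_le)⟩

theorem natDegree_aeval_X_one_le {P : MvPolynomial (Fin 2) R} {n : ℕ} (hP : P.IsHomogeneous n) :
    (aeval ![(Polynomial.X : Polynomial R), 1] P).natDegree ≤ n := by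
  rw [P.as_sum, map_sum]
  refine Polynomial.natDegree_sum_le_of_forall_le _ _ fun v hv => ?_
  rw [aeval_monomial, Finsupp.prod_fintype _ _ (fun _ => pow_zero _), Fin.prod_univ_two]
  simp only [Matrix.cons_val_zero, Matrix.cons_val_one, one_pow, mul_one]
  refine ((Polynomial.natDegree_C_mul_le _ _).trans (Polynomial.natDegree_X_pow_le _)).trans ?_
  by_contra h
  exact mem_support_iff.mp hv
    (hP.coeff_eq_zero (by rw [Finsupp.degree_eq_sum, Fin.sum_univ_two]; omega))

open Polynomial in
theorem IsHomogeneous.exists_linear_dvd [IsAlgClosed K] {P : MvPolynomial (Fin 2) K} {n : ℕ}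
    (hP : P.IsHomogeneous n) (hn : n ≠ 0) :
    ∃ L : MvPolynomial (Fin 2) K, L ≠ 0 ∧ L.IsHomogeneous 1 ∧ L ∣ P := by
  set p := MvPolynomial.aeval ![(Polynomial.X : K[X]), 1] P
  have hpn : p.natDegree ≤ n := natDegree_aeval_X_one_le hP
  have hPp : p.homogenize n = P := homogenize_eq_of_isHomogeneous hP rfl
  by_cases hp : p.natDegree = 0
  · refine ⟨.X 1, X_ne_zero 1, isHomogeneous_X _ _, ?_⟩
    rw [← hPp, eq_C_of_natDegree_eq_zero hp, homogenize_C]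
    exact (dvd_pow_self _ hn).mul_left _
  · obtain ⟨a, ha⟩ := IsAlgClosed.exists_root p fun h => hp (natDegree_eq_of_degree_eq_some h)
    obtain ⟨s, hs⟩ := dvd_iff_isRoot.mpr ha
    have hs0 : s ≠ 0 := by rintro rfl; simp [hs] at hp
    have hsn : s.natDegree ≤ n - 1 := by
      have := congrArg natDegree hs
      rw [natDegree_mul (X_sub_C_ne_zero a) hs0, natDegree_X_sub_C] at this
      omega
    refine ⟨(Polynomial.X - Polynomial.C a).homogenize 1, ?_, isHomogeneous_homogenize _, ?_⟩
    · rw [Ne, homogenize_eq_zero_iff (natDegree_X_sub_C a).le]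
      exact X_sub_C_ne_zero a
    · rw [← hPp, hs, show n = 1 + (n - 1) by omega,
        homogenize_mul _ _ (natDegree_X_sub_C a).le hsn]
      exact dvd_mul_right _ _

theorem IsHomogeneous.exists_linear_associated [IsAlgClosed K] {P : MvPolynomial (Fin 2) K}
    {n : ℕ} (hP : P.IsHomogeneous n) (hP0 : P ≠ 0) {p : MvPolynomial (Fin 2) K} (hp : Prime p)
    (hpP : p ∣ P) : ∃ L, L.IsHomogeneous 1 ∧ Associated p L := by
  induction n generalizing P with
  | zero =>
    obtain ⟨c, rfl⟩ := hP.exists_eq_C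
    have hc : c ≠ 0 := by rintro rfl; exact hP0 C_0
    exact absurd (isUnit_of_dvd_unit hpP (hc.isUnit.map C)) hp.not_isUnit
  | succ n ih =>
    obtain ⟨L, hL0, hL1, Q, rfl⟩ := hP.exists_linear_dvd n.succ_ne_zero
    rcases hp.dvd_or_dvd hpP with h | h
    · exact ⟨L, hL1, hp.associated_of_dvd (hL1.prime_of_degree_one hL0) h⟩
    · exact ih (hP.of_mul_left hL1 hP0).2 (right_ne_zero_of_mul hP0) h

theorem IsHomogeneous.dvd_of_forall_multiplicity_le [IsAlgClosed K]
    {P Q : MvPolynomial (Fin 2) K} {n : ℕ} (hP : P.IsHomogeneous n) (hP0 : P ≠ 0) (hQ0 : Q ≠ 0)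
    (h : ∀ L, L ≠ 0 → L.IsHomogeneous 1 → L ∣ P → multiplicity L P ≤ multiplicity L Q) :
    P ∣ Q := by
  refine (UniqueFactorizationMonoid.dvd_iff_emultiplicity_le hP0).mpr fun p hp => ?_
  by_cases hpP : p ∣ P
  · obtain ⟨L, hL1, hpL⟩ := hP.exists_linear_associated hP0 hp hpP
    have hL := hpL.prime hp
    rw [← emultiplicity_eq_of_associated_left hpL, ← emultiplicity_eq_of_associated_left hpL,
      (FiniteMultiplicity.of_prime_left hL hP0).emultiplicity_eq_multiplicity,
      (FiniteMultiplicity.of_prime_left hL hQ0).emultiplicity_eq_multiplicity]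
    exact_mod_cast h L hL.ne_zero hL1 (hpL.dvd_iff_dvd_left.mp hpP)
  · simp [emultiplicity_eq_zero.mpr hpP]

theorem IsHomogeneous.eq_smul_of_dvd {P Q : MvPolynomial σ K} {n : ℕ} (hP : P.IsHomogeneous n)
    (hQ : Q.IsHomogeneous n) (hQ0 : Q ≠ 0) (hPQ : P ∣ Q) : ∃ c : K, c ≠ 0 ∧ Q = c • P := by
  obtain ⟨D, rfl⟩ := hPQ
  have hD : D.IsHomogeneous 0 := by simpa using (hQ.of_mul_left hP hQ0).2
  obtain ⟨c, rfl⟩ := hD.exists_eq_C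
  refine ⟨c, fun hc => hQ0 (by simp [hc]), by rw [smul_eq_C_mul, mul_comm]⟩

end MvPolynomial

local notation "ℂ[x,y]" => MvPolynomial (Fin 2) ℂ

open Finset Function

/-- The type obtained from `e` by merging `q / p` parts equal to `p` into one part `q`. -/
def mergeParts (e : ℕ → ℕ) (p q : ℕ) : ℕ → ℕ :=
  update (update e p (e p - q / p)) q (e q + 1)

theorem slamB_mergeParts {e : ℕ → ℕ} {p q : ℕ} (hpq : p ≠ q) (hdvd : p ∣ q) (hq : 0 < q)
    (heq : 1 ≤ e q) (hep : q / p ≤ e p) : SlamB e (mergeParts e p q) :=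
  ⟨q, p, q / p, hpq.symm, Nat.div_pos (Nat.le_of_dvd hq hdvd) (Nat.pos_of_dvd_of_pos hdvd hq),
    (Nat.div_mul_cancel hdvd).symm, heq, hep, by simp [mergeParts], by simp [mergeParts, hpq],
    fun r h₁ h₂ => by simp [mergeParts, h₁, h₂]⟩

theorem slamC_mergeParts {e : ℕ → ℕ} {p₁ p₂ q : ℕ} (h₁₂ : p₁ ≠ p₂) (h₁ : p₁ ≠ q) (h₂ : p₂ ≠ q)
    (hdvd₁ : p₁ ∣ q) (hdvd₂ : p₂ ∣ q) (hq : 0 < q) (he₁ : q / p₁ ≤ e p₁) (he₂ : q / p₂ ≤ e p₂) :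
    SlamC e (mergeParts (mergeParts e p₁ q) p₂ q) :=
  ⟨p₁, p₂, q, q / p₁, q / p₂, h₁₂, h₁, h₂,
    Nat.div_pos (Nat.le_of_dvd hq hdvd₁) (Nat.pos_of_dvd_of_pos hdvd₁ hq),
    Nat.div_pos (Nat.le_of_dvd hq hdvd₂) (Nat.pos_of_dvd_of_pos hdvd₂ hq),
    (Nat.div_mul_cancel hdvd₁).symm, (Nat.div_mul_cancel hdvd₂).symm, he₁, he₂,
    by simp [mergeParts, h₁, h₁₂], by simp [mergeParts, h₂, h₁₂.symm],
    by simp [mergeParts], fun r hr₁ hr₂ hr₃ => by simp [mergeParts, hr₁, hr₂, hr₃]⟩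

namespace IsFactorizationOfType

variable {d : ℕ} {e : ℕ → ℕ} {F : ℂ[x,y]} {K : ℕ → ℂ[x,y]} {r : ℕ}

theorem ne_zero (hK : IsFactorizationOfType d e F K) (hF0 : F ≠ 0) (hr : r ∈ Icc 1 d) :
    K r ≠ 0 := by
  obtain ⟨-, c, -, rfl⟩ := hK
  intro h
  refine hF0 ?_
  rw [prod_eq_zero hr (by rw [h, zero_pow (by grind)]), smul_zero]

theorem pow_dvd (hK : IsFactorizationOfType d e F K) (hr : r ∈ Icc 1 d) : K r ^ r ∣ F := by
  obtain ⟨-, c, -, rfl⟩ := hK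
  rw [smul_eq_C_mul]
  exact (dvd_prod_of_mem (fun s => K s ^ s) hr).mul_left _

theorem exists_dvd_of_prime_dvd (hK : IsFactorizationOfType d e F K) {L : ℂ[x,y]}
    (hL : Prime L) (hLF : L ∣ F) : ∃ r ∈ Icc 1 d, L ∣ K r := by
  obtain ⟨-, c, hc, rfl⟩ := hK
  rw [smul_eq_C_mul, (hc.isUnit.map C).dvd_mul_left] at hLF
  obtain ⟨r, hr, h⟩ := hL.exists_mem_finset_dvd hLF
  exact ⟨r, hr, hL.dvd_of_dvd_pow h⟩

theorem emultiplicity_eq (hK : IsFactorizationOfType d e F K) (hF0 : F ≠ 0)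
    (hcop : PairwiseCoprimeComponents d K) {L : ℂ[x,y]} (hL0 : L ≠ 0) (hL1 : L.IsHomogeneous 1)
    (hr : r ∈ Icc 1 d) (hLK : L ∣ K r) :
    emultiplicity L F = (r * multiplicity L (K r) : ℕ) := by
  have hL := hL1.prime_of_degree_one hL0
  have hKr := hK.ne_zero hF0 hr
  obtain ⟨-, c, hc, rfl⟩ := hK
  rw [smul_eq_C_mul, emultiplicity_mul hL,
    emultiplicity_of_isUnit_right hL.not_isUnit (hc.isUnit.map C), zero_add,
    Finset.emultiplicity_prod hL, sum_eq_single r]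
  · rw [emultiplicity_pow hL,
      (FiniteMultiplicity.of_prime_left hL hKr).emultiplicity_eq_multiplicity]
    norm_cast
  · intro s hs hsr
    rw [emultiplicity_pow hL,
      emultiplicity_eq_zero.mpr fun h => hcop s hs r hr hsr ⟨L, hL0, hL1, h, hLK⟩, mul_zero]
  · exact fun h => absurd hr h

theorem le_of_pow_dvd (hK : IsFactorizationOfType d e F K) (hF0 : F ≠ 0) {L : ℂ[x,y]}
    (hL1 : L.IsHomogeneous 1) (hr : r ∈ Icc 1 d) {t : ℕ} (h : L ^ t ∣ K r) : t ≤ e r :=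
  (hK.1 r hr).le_of_pow_dvd (hK.ne_zero hF0 hr) hL1 h

theorem mul_multiplicity_le (hK : IsFactorizationOfType d e F K) (hF0 : F ≠ 0)
    (hF : F.IsHomogeneous d) {L : ℂ[x,y]} (hL1 : L.IsHomogeneous 1) (hr : r ∈ Icc 1 d) :
    r * multiplicity L (K r) ≤ d := by
  refine hF.le_of_pow_dvd hF0 hL1 ?_
  rw [mul_comm, pow_mul]
  exact (pow_dvd_pow_of_dvd (pow_multiplicity_dvd L (K r)) r).trans (hK.pow_dvd hr)

theorem mergeParts (hK : IsFactorizationOfType d e F K) (hF0 : F ≠ 0) {L : ℂ[x,y]}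
    (hL1 : L.IsHomogeneous 1) {p q : ℕ} (hp : p ∈ Icc 1 d) (hq : q ∈ Icc 1 d) (hpq : p ≠ q)
    (hdvd : p ∣ q) (hLK : L ^ (q / p) ∣ K p) :
    ∃ W, IsFactorizationOfType d (mergeParts e p q) F (update (update K p W) q (L * K q)) := by
  obtain ⟨W, hW⟩ := hLK
  have hWp : W.IsHomogeneous (e p - q / p) := by
    have hKp := hK.1 p hp
    rw [hW] at hKp
    exact (hKp.of_mul_left (by simpa using hL1.pow (q / p)) (hW ▸ hK.ne_zero hF0 hp)).2
  obtain ⟨hhom, c, hc, rfl⟩ := hK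
  refine ⟨W, fun r hr => ?_, c, hc, ?_⟩
  · by_cases hrq : r = q
    · subst hrq
      simpa [_root_.mergeParts, add_comm] using hL1.mul (hhom r hr)
    by_cases hrp : r = p
    · subst hrp
      simpa [_root_.mergeParts, hpq] using hWp
    · simpa [_root_.mergeParts, hrp, hrq] using hhom r hr
  · have hsub : {p, q} ⊆ Icc 1 d := by simp [insert_subset_iff, hp, hq]
    rw [← prod_sdiff (f := fun r => K r ^ r) hsub,
      ← prod_sdiff (f := fun r => update (update K p W) q (L * K q) r ^ r) hsub, prod_pair hpq,
      prod_pair hpq]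
    congr 2
    · exact prod_congr rfl fun r hr => by
        simp only [mem_sdiff, mem_insert, mem_singleton, not_or] at hr
        simp [hr.2.1, hr.2.2]
    · have hLq : L ^ q = (L ^ (q / p)) ^ p := by rw [← pow_mul, Nat.div_mul_cancel hdvd]
      simp only [update_self, update_of_ne hpq, hW, mul_pow L, hLq]
      ring

end IsFactorizationOfType

theorem exists_min_lcm {α : Type*} (P : α → ℕ → ℕ → Prop) (h : ∃ a r₁ r₂, P a r₁ r₂) :
    ∃ a r₁ r₂, P a r₁ r₂ ∧ ∀ b s₁ s₂, P b s₁ s₂ → Nat.lcm r₁ r₂ ≤ Nat.lcm s₁ s₂ := by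
  classical
  have hex : ∃ n, ∃ a r₁ r₂, P a r₁ r₂ ∧ Nat.lcm r₁ r₂ = n :=
    let ⟨a, r₁, r₂, h⟩ := h; ⟨_, a, r₁, r₂, h, rfl⟩
  obtain ⟨a, r₁, r₂, ha, hn⟩ := Nat.find_spec hex
  exact ⟨a, r₁, r₂, ha, fun b s₁ s₂ hb => hn ▸ Nat.find_min' hex ⟨b, s₁, s₂, hb, rfl⟩⟩

structure Mismatch (d : ℕ) (G H : ℕ → ℂ[x,y]) (L : ℂ[x,y]) (r₁ r₂ : ℕ) : Prop where
  ne_zero : L ≠ 0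
  isHomogeneous : L.IsHomogeneous 1
  mem_left : r₁ ∈ Icc 1 d
  mem_right : r₂ ∈ Icc 1 d
  ne : r₁ ≠ r₂
  dvd_left : L ∣ G r₁
  dvd_right : L ∣ H r₂

section

variable {d : ℕ} {e : ℕ → ℕ} {F : ℂ[x,y]} {G H : ℕ → ℂ[x,y]}

theorem eq_smul_of_forall_not_mismatch (hG : IsFactorizationOfType d e F G)
    (hH : IsFactorizationOfType d e F H) (hF0 : F ≠ 0) (hGcop : PairwiseCoprimeComponents d G)
    (hHcop : PairwiseCoprimeComponents d H) {r : ℕ} (hr : r ∈ Icc 1 d)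
    (h : ∀ L s, ¬ Mismatch d G H L r s) : ∃ c : ℂ, c ≠ 0 ∧ H r = c • G r := by
  have hGr := hG.ne_zero hF0 hr
  have hHr := hH.ne_zero hF0 hr
  refine (hG.1 r hr).eq_smul_of_dvd (hH.1 r hr) hHr
    ((hG.1 r hr).dvd_of_forall_multiplicity_le hGr hHr fun L hL0 hL1 hLG => ?_)
  obtain ⟨s, hs, hLH⟩ := hH.exists_dvd_of_prime_dvd (hL1.prime_of_degree_one hL0)
    (hLG.trans ((dvd_pow_self _ (by grind)).trans (hG.pow_dvd hr)))
  obtain rfl : s = r := by_contra fun hsr => h L s ⟨hL0, hL1, hr, hs, Ne.symm hsr, hLG, hLH⟩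
  have hmult := (hG.emultiplicity_eq hF0 hGcop hL0 hL1 hr hLG).symm.trans
    (hH.emultiplicity_eq hF0 hHcop hL0 hL1 hs hLH)
  rw [Nat.cast_inj] at hmult
  exact (Nat.eq_of_mul_eq_mul_left (by grind) hmult).le

theorem exists_mismatch_of_not_equiv (hG : IsFactorizationOfType d e F G)
    (hH : IsFactorizationOfType d e F H) (hF0 : F ≠ 0) (hGcop : PairwiseCoprimeComponents d G)
    (hHcop : PairwiseCoprimeComponents d H) (hinequiv : ¬ EquivFactorizations d G H) :
    ∃ L r₁ r₂, Mismatch d G H L r₁ r₂ := by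
  by_contra h
  push Not at h
  exact hinequiv fun r hr =>
    eq_smul_of_forall_not_mismatch hG hH hF0 hGcop hHcop hr fun L s => h L r s

namespace Mismatch

variable {L : ℂ[x,y]} {r₁ r₂ : ℕ}

theorem symm (h : Mismatch d G H L r₁ r₂) : Mismatch d H G L r₂ r₁ :=
  ⟨h.ne_zero, h.isHomogeneous, h.mem_right, h.mem_left, h.ne.symm, h.dvd_right, h.dvd_left⟩

theorem mul_multiplicity_eq (h : Mismatch d G H L r₁ r₂) (hG : IsFactorizationOfType d e F G)
    (hH : IsFactorizationOfType d e F H) (hF0 : F ≠ 0) (hGcop : PairwiseCoprimeComponents d G)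
    (hHcop : PairwiseCoprimeComponents d H) :
    r₁ * multiplicity L (G r₁) = r₂ * multiplicity L (H r₂) := by
  have := (hG.emultiplicity_eq hF0 hGcop h.ne_zero h.isHomogeneous h.mem_left h.dvd_left).symm.trans
    (hH.emultiplicity_eq hF0 hHcop h.ne_zero h.isHomogeneous h.mem_right h.dvd_right)
  exact_mod_cast this

theorem lcm_le (h : Mismatch d G H L r₁ r₂) (hG : IsFactorizationOfType d e F G)
    (hH : IsFactorizationOfType d e F H) (hF0 : F ≠ 0) (hGcop : PairwiseCoprimeComponents d G)
    (hHcop : PairwiseCoprimeComponents d H) :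
    Nat.lcm r₁ r₂ ≤ r₁ * multiplicity L (G r₁) := by
  refine Nat.le_of_dvd ?_ (Nat.lcm_dvd (dvd_mul_right _ _) ?_)
  · exact Nat.mul_pos (mem_Icc.mp h.mem_left).1 (multiplicity_pos_of_dvd h.dvd_left)
  · rw [h.mul_multiplicity_eq hG hH hF0 hGcop hHcop]
    exact dvd_mul_right _ _

theorem pow_dvd (h : Mismatch d G H L r₁ r₂) (hG : IsFactorizationOfType d e F G)
    (hH : IsFactorizationOfType d e F H) (hF0 : F ≠ 0) (hGcop : PairwiseCoprimeComponents d G)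
    (hHcop : PairwiseCoprimeComponents d H) {t : ℕ} (ht : t * r₁ ≤ Nat.lcm r₁ r₂) :
    L ^ t ∣ G r₁ := by
  refine pow_dvd_of_le_multiplicity (Nat.le_of_mul_le_mul_left ?_ (mem_Icc.mp h.mem_left).1)
  rw [mul_comm]
  exact ht.trans (h.lcm_le hG hH hF0 hGcop hHcop)

theorem exists_mismatch_from_right (h : Mismatch d G H L r₁ r₂)
    (hG : IsFactorizationOfType d e F G) (hH : IsFactorizationOfType d e F H) (hF0 : F ≠ 0)
    (hGcop : PairwiseCoprimeComponents d G) (hHcop : PairwiseCoprimeComponents d H) :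
    ∃ M r', Mismatch d G H M r₂ r' := by
  by_contra hno
  push Not at hno
  obtain ⟨c, hc, hHG⟩ :=
    eq_smul_of_forall_not_mismatch hG hH hF0 hGcop hHcop h.mem_right hno
  have hLG : L ∣ G r₂ := by
    have := h.dvd_right
    rwa [hHG, smul_eq_C_mul, (hc.isUnit.map C).dvd_mul_left] at this
  exact hGcop r₁ h.mem_left r₂ h.mem_right h.ne ⟨L, h.ne_zero, h.isHomogeneous, h.dvd_left, hLG⟩

theorem exists_slamB (h : Mismatch d G H L r₁ r₂) (hG : IsFactorizationOfType d e F G)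
    (hH : IsFactorizationOfType d e F H) (hF0 : F ≠ 0) (hGcop : PairwiseCoprimeComponents d G)
    (hHcop : PairwiseCoprimeComponents d H) (hdvd : r₂ ∣ r₁) :
    ∃ f, SlamB e f ∧ ∃ Q, IsFactorizationOfType d f F Q := by
  have hpow : L ^ (r₁ / r₂) ∣ H r₂ := h.symm.pow_dvd hH hG hF0 hHcop hGcop <| by
    rw [Nat.div_mul_cancel hdvd, Nat.lcm_comm, Nat.lcm_eq_left_iff_dvd.mpr hdvd]
  obtain ⟨W, hW⟩ := hH.mergeParts hF0 h.isHomogeneous h.mem_right h.mem_left h.ne.symm hdvd hpow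
  refine ⟨_, slamB_mergeParts h.ne.symm hdvd (mem_Icc.mp h.mem_left).1 ?_ ?_, _, hW⟩
  · exact hG.le_of_pow_dvd hF0 h.isHomogeneous h.mem_left (by rw [pow_one]; exact h.dvd_left)
  · exact hH.le_of_pow_dvd hF0 h.isHomogeneous h.mem_right hpow

theorem exists_slamC (h : Mismatch d G H L r₁ r₂) (hG : IsFactorizationOfType d e F G)
    (hH : IsFactorizationOfType d e F H) (hF0 : F ≠ 0) (hF : F.IsHomogeneous d)
    (hGcop : PairwiseCoprimeComponents d G) (hHcop : PairwiseCoprimeComponents d H)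
    (hmin : ∀ M s₁ s₂, Mismatch d G H M s₁ s₂ → Nat.lcm r₁ r₂ ≤ Nat.lcm s₁ s₂)
    (h₁ : Nat.lcm r₁ r₂ ≠ r₁) (h₂ : Nat.lcm r₁ r₂ ≠ r₂) :
    ∃ f, SlamC e f ∧ ∃ Q, IsFactorizationOfType d f F Q := by
  set ℓ := Nat.lcm r₁ r₂
  obtain ⟨M, r', hM⟩ := h.exists_mismatch_from_right hG hH hF0 hGcop hHcop
  have hℓ : ℓ ∈ Icc 1 d := mem_Icc.mpr
    ⟨Nat.lcm_pos (mem_Icc.mp h.mem_left).1 (mem_Icc.mp h.mem_right).1,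
      (h.lcm_le hG hH hF0 hGcop hHcop).trans
        (hG.mul_multiplicity_le hF0 hF h.isHomogeneous h.mem_left)⟩
  have hL : L ^ (ℓ / r₁) ∣ G r₁ :=
    h.pow_dvd hG hH hF0 hGcop hHcop (Nat.div_mul_cancel (Nat.dvd_lcm_left r₁ r₂)).le
  have hM' : M ^ (ℓ / r₂) ∣ G r₂ := hM.pow_dvd hG hH hF0 hGcop hHcop <| by
    rw [Nat.div_mul_cancel (Nat.dvd_lcm_right r₁ r₂)]
    exact hmin M r₂ r' hM
  obtain ⟨W₁, hW₁⟩ := hG.mergeParts hF0 h.isHomogeneous h.mem_left hℓ (Ne.symm h₁)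
    (Nat.dvd_lcm_left r₁ r₂) hL
  obtain ⟨W₂, hW₂⟩ := hW₁.mergeParts hF0 hM.isHomogeneous h.mem_right hℓ (Ne.symm h₂)
    (Nat.dvd_lcm_right r₁ r₂) (by rwa [update_of_ne (Ne.symm h₂), update_of_ne h.ne.symm])
  refine ⟨_, slamC_mergeParts h.ne (Ne.symm h₁) (Ne.symm h₂) (Nat.dvd_lcm_left r₁ r₂)
    (Nat.dvd_lcm_right r₁ r₂) (mem_Icc.mp hℓ).1 ?_ ?_, _, hW₂⟩
  · exact hG.le_of_pow_dvd hF0 h.isHomogeneous h.mem_left hL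
  · exact hG.le_of_pow_dvd hF0 hM.isHomogeneous h.mem_right hM'

end Mismatch

end

theorem two_factorizations_refine_general (d : ℕ) (e : ℕ → ℕ)
    (F : MvPolynomial (Fin 2) ℂ) (hF0 : F ≠ 0) (hF : F.IsHomogeneous d)
    (G H : ℕ → MvPolynomial (Fin 2) ℂ)
    (hG : IsFactorizationOfType d e F G) (hH : IsFactorizationOfType d e F H)
    (hGcop : PairwiseCoprimeComponents d G) (hHcop : PairwiseCoprimeComponents d H)
    (hinequiv : ¬ EquivFactorizations d G H) :
    ∃ f : ℕ → ℕ, (SlamB e f ∨ SlamC e f) ∧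
      ∃ Q : ℕ → MvPolynomial (Fin 2) ℂ, IsFactorizationOfType d f F Q := by
  obtain ⟨L, r₁, r₂, h, hmin⟩ :=
    exists_min_lcm _ (exists_mismatch_of_not_equiv hG hH hF0 hGcop hHcop hinequiv)
  by_cases h₁ : Nat.lcm r₁ r₂ = r₁
  · obtain ⟨f, hf, hQ⟩ :=
      h.exists_slamB hG hH hF0 hGcop hHcop (Nat.lcm_eq_left_iff_dvd.mp h₁)
    exact ⟨f, Or.inl hf, hQ⟩
  by_cases h₂ : Nat.lcm r₁ r₂ = r₂
  · obtain ⟨f, hf, hQ⟩ :=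
      h.symm.exists_slamB hH hG hF0 hHcop hGcop (Nat.lcm_eq_right_iff_dvd.mp h₂)
    exact ⟨f, Or.inl hf, hQ⟩
  obtain ⟨f, hf, hQ⟩ := h.exists_slamC hG hH hF0 hF hGcop hHcop hmin h₁ h₂
  exact ⟨f, Or.inr hf, hQ⟩

/-- If a nonzero binary form `F` of degree `d` admits two inequivalent factorizations of
type `λ`, each with pairwise coprime components, then `F` admits a factorization of type
`μ` for some `μ ∈ S_λ^{(b)} ∪ S_λ^{(c)}`. -/
theorem two_factorizations_refine (d : ℕ) (e : ℕ → ℕ)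
    (hd : 1 ≤ d) (hpart : ∑ r ∈ Finset.Icc 1 d, r * e r = d)
    (F : MvPolynomial (Fin 2) ℂ) (hF0 : F ≠ 0) (hF : F.IsHomogeneous d)
    (G H : ℕ → MvPolynomial (Fin 2) ℂ)
    (hG : IsFactorizationOfType d e F G) (hH : IsFactorizationOfType d e F H)
    (hGcop : PairwiseCoprimeComponents d G) (hHcop : PairwiseCoprimeComponents d H)
    (hinequiv : ¬ EquivFactorizations d G H) :
    ∃ f : ℕ → ℕ, (SlamB e f ∨ SlamC e f) ∧
      ∃ Q : ℕ → MvPolynomial (Fin 2) ℂ, IsFactorizationOfType d f F Q :=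
  two_factorizations_refine_general d e F hF0 hF G H hG hH hGcop hHcop hinequiv
end

section
/- Let λ = (1^{e₁} 2^{e₂} ⋯ d^{e_d}) be a partition of d. Let F ∈ ℂ[x,y] be a nonzero binary form of degree d admitting two inequivalent factorizations (G_r) and (H_r) of type λ, each having pairwise coprime components (for r ≠ r', G_r and G_{r'} have no common linear factor, and likewise for H). Let r₁ be the largest index r for which G_r is not a scalar multiple of H_r. Then there exists a linear form L such that L divides G_{r₁} but L does not divide H_{r₁}. -/
open MvPolynomial

/-!
Unique factorization in `ℂ[x, y]`: every prime factor of a nonzero binary form is, up to a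
unit, a linear form. If every linear factor of `G_{r₁}` divided `H_{r₁}`, then for each prime
factor `p` of `G_{r₁}` the coprimality of the components isolates the index `r₁` on both sides of
`∏ G_r^r ~ ∏ H_r^r`, so `r₁ · v_p(G_{r₁}) = r₁ · v_p(H_{r₁})`. Hence `G_{r₁} ∣ H_{r₁}`, and since
both have degree `e_{r₁}`, the quotient is a nonzero constant.
-/

section Multiplicity

variable {α : Type*} [CommMonoidWithZero α]

theorem emultiplicity_prod_pow_of_not_dvd [IsCancelMulZero α] {p : α} (hp : Prime p)
    {I : Finset ℕ} {G : ℕ → α} {r₀ : ℕ} (hr₀ : r₀ ∈ I) (hG : ∀ r ∈ I, r ≠ r₀ → ¬ p ∣ G r) :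
    emultiplicity p (∏ r ∈ I, G r ^ r) = r₀ * emultiplicity p (G r₀) := by
  rw [Finset.emultiplicity_prod hp, Finset.sum_eq_single_of_mem r₀ hr₀ fun r hr hne => by
    rw [emultiplicity_pow hp, emultiplicity_eq_zero.mpr (hG r hr hne), mul_zero],
    emultiplicity_pow hp]

theorem dvd_of_associated_prod_pow [UniqueFactorizationMonoid α] {I : Finset ℕ} {G H : ℕ → α}
    (hGH : Associated (∏ r ∈ I, G r ^ r) (∏ r ∈ I, H r ^ r)) {r₀ : ℕ} (hr₀ : r₀ ∈ I)
    (hr₀0 : r₀ ≠ 0) (hG0 : G r₀ ≠ 0)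
    (hG : ∀ p, Prime p → p ∣ G r₀ → ∀ r ∈ I, r ≠ r₀ → ¬ p ∣ G r)
    (hH : ∀ p, Prime p → p ∣ H r₀ → ∀ r ∈ I, r ≠ r₀ → ¬ p ∣ H r)
    (hfactor : ∀ p, Prime p → p ∣ G r₀ → p ∣ H r₀) :
    G r₀ ∣ H r₀ := by
  refine (UniqueFactorizationMonoid.dvd_iff_emultiplicity_le hG0).mpr fun p hp => ?_
  by_cases hpG : p ∣ G r₀
  · have h := emultiplicity_eq_of_associated_right (a := p) hGH
    rw [emultiplicity_prod_pow_of_not_dvd hp hr₀ (hG p hp hpG),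
      emultiplicity_prod_pow_of_not_dvd hp hr₀ (hH p hp (hfactor p hp hpG))] at h
    exact (ENat.mul_le_mul_left_iff (by exact_mod_cast hr₀0) (ENat.natCast_ne_top r₀)).mp h.le
  · rw [emultiplicity_eq_zero.mpr hpG]
    exact zero_le

end Multiplicity

namespace MvPolynomial

variable {σ K : Type*} [Field K]

theorem irreducible_of_isHomogeneous_one {L : MvPolynomial σ K} (hL : L.IsHomogeneous 1)
    (hL0 : L ≠ 0) : Irreducible L := by
  refine irreducible_of_totalDegree_eq_one (hL.totalDegree hL0) fun x hx => ?_
  refine isUnit_iff_ne_zero.mpr fun hx0 => hL0 ?_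
  ext i
  simpa [hx0] using hx i

theorem IsHomogeneous.exists_eq_smul_of_dvd {f g : MvPolynomial σ K} {n : ℕ}
    (hf : f.IsHomogeneous n) (hg : g.IsHomogeneous n) (hg0 : g ≠ 0) (hfg : f ∣ g) :
    ∃ c : K, c ≠ 0 ∧ g = c • f := by
  obtain ⟨k, rfl⟩ := hfg
  have hf0 : f ≠ 0 := left_ne_zero_of_mul hg0
  have hk0 : k ≠ 0 := right_ne_zero_of_mul hg0
  have hk : k.totalDegree = 0 := by
    have := totalDegree_mul_of_isDomain hf0 hk0
    rw [hg.totalDegree hg0, hf.totalDegree hf0] at this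
    omega
  obtain ⟨c, rfl⟩ : ∃ c, k = C c := ⟨_, totalDegree_eq_zero_iff_eq_C.mp hk⟩
  exact ⟨c, by rintro rfl; simp at hk0, by rw [smul_eq_C_mul, mul_comm]⟩

end MvPolynomial

theorem Polynomial.homogenize_prod_X_sub_C {K : Type*} [Field K] (s : Multiset K) :
    (s.map fun a => X - C a).prod.homogenize (Multiset.card s) =
      (s.map fun a => (X - C a).homogenize 1).prod := by
  induction s using Multiset.induction with
  | empty => simp
  | cons a s ih =>
    rw [Multiset.map_cons, Multiset.prod_cons, Multiset.card_cons, add_comm,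
      homogenize_mul _ _ (natDegree_X_sub_C_le a) (natDegree_multiset_prod_X_sub_C_eq_card s).le,
      ih, Multiset.map_cons, Multiset.prod_cons]

namespace MvPolynomial.IsHomogeneous

variable {K : Type*} [Field K] [IsAlgClosed K]

theorem exists_eq_C_mul_prod_linear {f : MvPolynomial (Fin 2) K} {n : ℕ}
    (hf : f.IsHomogeneous n) :
    ∃ (a : K) (s : Multiset (MvPolynomial (Fin 2) K)),
      (∀ L ∈ s, L.IsHomogeneous 1 ∧ L ≠ 0) ∧ f = C a * s.prod := by
  set p := MvPolynomial.aeval (![Polynomial.X, 1] : Fin 2 → Polynomial K) f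
  have hpn : p.natDegree ≤ n := by
    simpa using aeval_natDegree_le f hf.totalDegree_le ![Polynomial.X, 1] (n := 1)
      (by intro i; fin_cases i <;> simp)
  have hcard : Multiset.card p.roots ≤ n := (Polynomial.card_roots' p).trans hpn
  -- dehomogenizing at `y = 1` loses the factors `y` of `f`; they return as `X 1 ^ (n - #roots)`
  refine ⟨p.leadingCoeff, (p.roots.map fun a => (Polynomial.X - Polynomial.C a).homogenize 1) +
    Multiset.replicate (n - Multiset.card p.roots) (X 1), ?_, ?_⟩
  · simp only [Multiset.mem_add, Multiset.mem_map, Multiset.mem_replicate]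
    rintro L (⟨a, -, rfl⟩ | ⟨-, rfl⟩)
    · refine ⟨Polynomial.isHomogeneous_homogenize _, ?_⟩
      rw [Ne, Polynomial.homogenize_eq_zero_iff (Polynomial.natDegree_X_sub_C_le a)]
      exact Polynomial.X_sub_C_ne_zero a
    · exact ⟨isHomogeneous_X _ _, X_ne_zero _⟩
  · calc f = p.homogenize n := (Polynomial.homogenize_eq_of_isHomogeneous hf rfl).symm
      _ = (Polynomial.C p.leadingCoeff *
            ((p.roots.map fun a => Polynomial.X - Polynomial.C a).prod * 1)).homogenize
            (Multiset.card p.roots + (n - Multiset.card p.roots)) := by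
        rw [mul_one, Nat.add_sub_cancel' hcard, ← (IsAlgClosed.splits p).eq_prod_roots]
      _ = _ := by
        rw [Polynomial.homogenize_C_mul, Polynomial.homogenize_mul _ _
          (Polynomial.natDegree_multiset_prod_X_sub_C_eq_card _).le (by simp),
          Polynomial.homogenize_prod_X_sub_C, Polynomial.homogenize_one, Multiset.prod_add,
          Multiset.prod_replicate]

theorem exists_associated_linear_of_prime_dvd {f : MvPolynomial (Fin 2) K} {n : ℕ}
    (hf : f.IsHomogeneous n) (hf0 : f ≠ 0) {p : MvPolynomial (Fin 2) K} (hp : Prime p)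
    (hpf : p ∣ f) : ∃ L : MvPolynomial (Fin 2) K, L ≠ 0 ∧ L.IsHomogeneous 1 ∧ Associated p L := by
  obtain ⟨a, s, hs, rfl⟩ := hf.exists_eq_C_mul_prod_linear
  have ha : a ≠ 0 := by rintro rfl; simp at hf0
  have hps : p ∣ s.prod := (hp.dvd_or_dvd hpf).resolve_left fun h =>
    hp.not_isUnit (isUnit_of_dvd_unit h (ha.isUnit.map C))
  obtain ⟨L, hLs, hpL⟩ := hp.exists_mem_multiset_dvd hps
  obtain ⟨hL, hL0⟩ := hs L hLs
  exact ⟨L, hL0, hL, hp.irreducible.associated_of_dvd (irreducible_of_isHomogeneous_one hL hL0) hpL⟩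

end MvPolynomial.IsHomogeneous

section Factorizations

variable {d : ℕ} {e : ℕ → ℕ} {F : MvPolynomial (Fin 2) ℂ} {G H : ℕ → MvPolynomial (Fin 2) ℂ}

theorem IsFactorizationOfType.ne_zero_s16 (hG : IsFactorizationOfType d e F G) (hF0 : F ≠ 0)
    {r : ℕ} (hr : r ∈ Finset.Icc 1 d) : G r ≠ 0 := by
  obtain ⟨-, c, -, rfl⟩ := hG
  intro h0
  apply hF0
  have hr0 : r ≠ 0 := Nat.one_le_iff_ne_zero.mp (Finset.mem_Icc.mp hr).1
  rw [Finset.prod_eq_zero hr (by rw [h0, zero_pow hr0]), smul_zero]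

theorem IsFactorizationOfType.associated_prod (hG : IsFactorizationOfType d e F G)
    (hH : IsFactorizationOfType d e F H) :
    Associated (∏ r ∈ Finset.Icc 1 d, G r ^ r) (∏ r ∈ Finset.Icc 1 d, H r ^ r) := by
  obtain ⟨-, c, hc, hFG⟩ := hG
  obtain ⟨-, c', hc', hFH⟩ := hH
  rw [smul_eq_C_mul] at hFG hFH
  refine (associated_unit_mul_left _ _ (hc.isUnit.map C)).symm.trans ?_
  rw [← hFG, hFH]
  exact associated_unit_mul_left _ _ (hc'.isUnit.map C)

theorem PairwiseCoprimeComponents.not_prime_dvd (hcop : PairwiseCoprimeComponents d G)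
    {r₀ : ℕ} (hr₀ : r₀ ∈ Finset.Icc 1 d) {n : ℕ} (hhom : (G r₀).IsHomogeneous n)
    (hG0 : G r₀ ≠ 0) {p : MvPolynomial (Fin 2) ℂ} (hp : Prime p) (hpG : p ∣ G r₀)
    {r : ℕ} (hr : r ∈ Finset.Icc 1 d) (hne : r ≠ r₀) : ¬ p ∣ G r := fun hpGr => by
  obtain ⟨L, hL0, hL, hpL⟩ := hhom.exists_associated_linear_of_prime_dvd hG0 hp hpG
  exact hcop r₀ hr₀ r hr hne.symm
    ⟨L, hL0, hL, hpL.dvd_iff_dvd_left.mp hpG, hpL.dvd_iff_dvd_left.mp hpGr⟩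

end Factorizations

theorem largest_differing_index_linear_factor_general (d : ℕ) (e : ℕ → ℕ)
    (F : MvPolynomial (Fin 2) ℂ) (hF0 : F ≠ 0)
    (G H : ℕ → MvPolynomial (Fin 2) ℂ)
    (hG : IsFactorizationOfType d e F G) (hH : IsFactorizationOfType d e F H)
    (hGcop : PairwiseCoprimeComponents d G) (hHcop : PairwiseCoprimeComponents d H)
    (r₁ : ℕ) (hr₁ : r₁ ∈ Finset.Icc 1 d)
    (hdiff : ¬ ∃ c : ℂ, c ≠ 0 ∧ H r₁ = c • G r₁) :
    ∃ L : MvPolynomial (Fin 2) ℂ, L ≠ 0 ∧ L.IsHomogeneous 1 ∧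
      L ∣ G r₁ ∧ ¬ L ∣ H r₁ := by
  by_contra! hcon
  have hG0 := hG.ne_zero_s16 hF0 hr₁
  have hH0 := hH.ne_zero_s16 hF0 hr₁
  have hGhom := hG.1 r₁ hr₁
  have hHhom := hH.1 r₁ hr₁
  have hdvd : G r₁ ∣ H r₁ :=
    dvd_of_associated_prod_pow (hG.associated_prod hH) hr₁
      (Nat.one_le_iff_ne_zero.mp (Finset.mem_Icc.mp hr₁).1) hG0
      (fun _ hp hpG _ hr hne => hGcop.not_prime_dvd hr₁ hGhom hG0 hp hpG hr hne)
      (fun _ hp hpH _ hr hne => hHcop.not_prime_dvd hr₁ hHhom hH0 hp hpH hr hne)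
      fun _ hp hpG => by
        obtain ⟨L, hL0, hL, hpL⟩ := hGhom.exists_associated_linear_of_prime_dvd hG0 hp hpG
        exact hpL.dvd_iff_dvd_left.mpr (hcon L hL0 hL (hpL.dvd_iff_dvd_left.mp hpG))
  exact hdiff (hGhom.exists_eq_smul_of_dvd hHhom hH0 hdvd)

/-- Let `(G_r)`, `(H_r)` be two inequivalent factorizations of type `λ` of a nonzero
binary form `F`, each with pairwise coprime components, and let `r₁` be the largest
index at which `G_{r₁}` is not a scalar multiple of `H_{r₁}`. Then some linear form `L`
divides `G_{r₁}` but not `H_{r₁}`. -/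
theorem largest_differing_index_linear_factor (d : ℕ) (e : ℕ → ℕ)
    (hd : 1 ≤ d) (hpart : ∑ r ∈ Finset.Icc 1 d, r * e r = d)
    (F : MvPolynomial (Fin 2) ℂ) (hF0 : F ≠ 0) (hF : F.IsHomogeneous d)
    (G H : ℕ → MvPolynomial (Fin 2) ℂ)
    (hG : IsFactorizationOfType d e F G) (hH : IsFactorizationOfType d e F H)
    (hGcop : PairwiseCoprimeComponents d G) (hHcop : PairwiseCoprimeComponents d H)
    (hinequiv : ¬ EquivFactorizations d G H)
    (r₁ : ℕ) (hr₁ : r₁ ∈ Finset.Icc 1 d)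
    (hdiff : ¬ ∃ c : ℂ, c ≠ 0 ∧ H r₁ = c • G r₁)
    (hmax : ∀ r ∈ Finset.Icc 1 d, r₁ < r → ∃ c : ℂ, c ≠ 0 ∧ H r = c • G r) :
    ∃ L : MvPolynomial (Fin 2) ℂ, L ≠ 0 ∧ L.IsHomogeneous 1 ∧
      L ∣ G r₁ ∧ ¬ L ∣ H r₁ :=
  largest_differing_index_linear_factor_general d e F hF0 G H hG hH hGcop hHcop r₁ hr₁ hdiff
end
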